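/- arXiv:2507.14247 — 2 statements merged into one kernel-verified Lean document; each statement's English description precedes it below -/
import Mathlib

section
/- For every n ≥ 1, the map 𝔮 : W_n(K^sep)^× → W_n(K^sep)^×, x ↦ F(x)·x^{-1}, is a surjective homomorphism of abelian groups whose kernel is exactly W_n(F_p)^×, the group of units of W_n(K^sep) all of whose components lie in the prime field F_p. -/
noncomputable section

open WittVector

/-- Componentwise map on truncated Witt vectors induced by a ring homomorphism. -/
noncomputable def TruncatedWittVector.mapRingHom (p n : ℕ) [hp : Fact p.Prime]
    {R S : Type*} [CommRing R] [CommRing S] (f : R →+* S) :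
    TruncatedWittVector p n R →+* TruncatedWittVector p n S :=
  RingHom.liftOfRightInverse (WittVector.truncate n) TruncatedWittVector.out
    (fun x => x.truncateFun_out)
    ⟨(WittVector.truncate n).comp (WittVector.map f), by
      intro x hx
      rw [RingHom.mem_ker] at hx ⊢
      rw [RingHom.comp_apply, ← RingHom.mem_ker, WittVector.mem_ker_truncate]
      rw [← RingHom.mem_ker, WittVector.mem_ker_truncate] at hx
      intro i hi
      rw [WittVector.map_coeff, hx i hi, map_zero]⟩

/-- The map `𝔮 x = F(x) · x⁻¹` on the unit group of truncated Witt vectors,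
where `F` is the (componentwise `p`-th power) Frobenius. -/
noncomputable def wittQ (p n : ℕ) [Fact p.Prime] (R : Type*) [CommRing R] [CharP R p] :
    (TruncatedWittVector p n R)ˣ →* (TruncatedWittVector p n R)ˣ :=
  (Units.map (TruncatedWittVector.mapRingHom p n (frobenius R p)).toMonoidHom) /
    (MonoidHom.id _)

/-- The map `𝔮 x = F(x) · x⁻¹` on the unit group of (full) Witt vectors. -/
noncomputable def wittQFull (p : ℕ) [Fact p.Prime] (R : Type*) [CommRing R] [CharP R p] :
    (WittVector p R)ˣ →* (WittVector p R)ˣ :=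
  (Units.map (WittVector.map (frobenius R p)).toMonoidHom) / (MonoidHom.id _)

/-- The unit-group homomorphism `W_n(K)ˣ → W_n(L)ˣ` induced by an algebra map. -/
noncomputable def wittIncl (p n : ℕ) [Fact p.Prime] (K L : Type*) [CommRing K] [CommRing L]
    [Algebra K L] : (TruncatedWittVector p n K)ˣ →* (TruncatedWittVector p n L)ˣ :=
  Units.map (TruncatedWittVector.mapRingHom p n (algebraMap K L)).toMonoidHom

/-- The subfield `K(y₀, …, y_{n-1})` of `Ω` generated over `K` by the components of a
truncated Witt vector `y` over `Ω`. -/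
noncomputable def wittGenField (p n : ℕ) (K Ω : Type*) [Field K] [Field Ω] [Algebra K Ω]
    (y : TruncatedWittVector p n Ω) : IntermediateField K Ω :=
  IntermediateField.adjoin K (Set.range fun i => y.coeff i)

/-!
Given a unit `b = truncate n a` of `Wₙ(Kˢᵉᵖ)`, one solves `F x = a x` modulo `Vⁿ` one Witt
component at a time. The zeroth component asks for `t ≠ 0` with `t ^ (p - 1) = a₀`. Once
`F x ≡ a x` modulo `Vᵐ`, replacing `x` by `x + Vᵐ [t]` changes the `m`-th component of
`F x - a x` by `t ^ p - a₀ ^ p ^ m * t`; the equation `t ^ p - a₀ ^ p ^ m * t = c` is separable,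
hence solvable in `Kˢᵉᵖ`. The kernel of `𝔮` consists of the vectors fixed by the componentwise
Frobenius, i.e. those with components in the prime field.
-/

namespace TruncatedWittVector

variable {p n : ℕ} [Fact p.Prime] {R S : Type*} [CommRing R] [CommRing S]

theorem mapRingHom_truncate (f : R →+* S) (x : WittVector p R) :
    mapRingHom p n f (WittVector.truncate n x) = WittVector.truncate n (WittVector.map f x) :=
  RingHom.liftOfRightInverse_comp_apply _ _ _ _ x

theorem coeff_mapRingHom (f : R →+* S) (y : TruncatedWittVector p n R) (i : Fin n) :
    (mapRingHom p n f y).coeff i = f (y.coeff i) := by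
  obtain ⟨x, rfl⟩ := WittVector.truncate_surjective (p := p) n R y
  rw [mapRingHom_truncate, WittVector.coeff_truncate, WittVector.coeff_truncate,
    WittVector.map_coeff]

end TruncatedWittVector

namespace WittVector

variable {p : ℕ} [hp : Fact p.Prime]

theorem isUnit_coeff_zero_of_isUnit_truncate {R : Type*} [CommRing R] {n : ℕ} (hn : 1 ≤ n)
    {x : WittVector p R} (hx : IsUnit (truncate n x)) : IsUnit (x.coeff 0) := by
  obtain ⟨v, hv⟩ := hx.exists_right_inv
  obtain ⟨y, rfl⟩ := truncate_surjective (p := p) n R v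
  have h := congrArg (TruncatedWittVector.coeff ⟨0, hn⟩)
    (hv.trans (map_one (truncate (p := p) (R := R) n)).symm)
  rw [← map_mul, coeff_truncate, coeff_truncate, mul_coeff_zero, one_coeff_zero] at h
  exact .of_mul_eq_one _ h

variable {k : Type*} [Field k] [CharP k p] [IsSepClosed k]

theorem exists_coeff_zero_frobenius_sub_mul_eq_zero {a : WittVector p k} (ha : a.coeff 0 ≠ 0) :
    ∃ x : WittVector p k, x.coeff 0 ≠ 0 ∧ (frobenius x - a * x).coeff 0 = 0 := by
  have : NeZero ((p - 1 : ℕ) : k) := ⟨by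
    rw [Nat.cast_sub hp.out.one_le, CharP.cast_eq_zero, Nat.cast_one, zero_sub]
    exact neg_ne_zero.mpr one_ne_zero⟩
  obtain ⟨t, ht⟩ := IsSepClosed.exists_pow_nat_eq (a.coeff 0) (p - 1)
  have ht0 : t ≠ 0 := by
    rintro rfl
    exact ha (by rw [← ht, zero_pow (Nat.sub_ne_zero_of_lt hp.out.one_lt)])
  refine ⟨teichmuller p t, by rwa [teichmuller_coeff_zero], ?_⟩
  rw [← constantCoeff_apply, map_sub, map_mul, constantCoeff_apply, constantCoeff_apply,
    constantCoeff_apply, coeff_frobenius_charP, teichmuller_coeff_zero, ← ht, ← pow_succ,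
    Nat.sub_add_cancel hp.out.one_le, sub_self]

theorem exists_frobenius_sub_mul_coeff_eq_zero_succ (a : WittVector p k)
    (ha : a.coeff 0 ≠ 0) {m : ℕ} {x : WittVector p k}
    (hx : ∀ i < m, (frobenius x - a * x).coeff i = 0) :
    ∃ t : k, ∀ i < m + 1,
      (frobenius (x + verschiebung^[m] (teichmuller p t)) -
        a * (x + verschiebung^[m] (teichmuller p t))).coeff i = 0 := by
  obtain ⟨t, ht⟩ := IsSepClosed.exists_root_C_mul_X_pow_add_C_mul_X_add_C' p p 1
    (-a.coeff 0 ^ p ^ m) ((frobenius x - a * x).coeff m) dvd_rfl hp.out.two_le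
    (neg_ne_zero.mpr (pow_ne_zero _ ha))
  refine ⟨t, ?_⟩
  set e := (frobenius x - a * x).shift m +
    (frobenius (teichmuller p t) - teichmuller p t * frobenius^[m] a)
  have hz : frobenius (verschiebung^[m] (teichmuller p t)) - a * verschiebung^[m] (teichmuller p t)
      = verschiebung^[m] (frobenius (teichmuller p t) - teichmuller p t * frobenius^[m] a) := by
    rw [iterate_map_sub, ← iterate_verschiebung_mul_left, mul_comm a,
      (verschiebung_frobenius_comm.iterate_left m).eq]
  have he : frobenius (x + verschiebung^[m] (teichmuller p t)) -
      a * (x + verschiebung^[m] (teichmuller p t)) = verschiebung^[m] e := by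
    rw [map_add, mul_add, add_sub_add_comm, hz, eq_iterate_verschiebung hx, ← iterate_map_add]
  intro i hi
  rw [he]
  rcases Nat.lt_succ_iff_lt_or_eq.mp hi with hi | rfl
  · exact iterate_verschiebung_coeff_eq_zero _ hi
  have hcoeff := iterate_verschiebung_coeff e i 0
  rw [zero_add] at hcoeff
  rw [hcoeff, ← constantCoeff_apply]
  simp only [e, map_add, map_sub, map_mul, constantCoeff_apply, shift_coeff, coeff_frobenius_charP,
    teichmuller_coeff_zero, iterate_frobenius_coeff, add_zero]
  linear_combination ht

theorem exists_frobenius_sub_mul_coeff_eq_zero {a : WittVector p k} (ha : a.coeff 0 ≠ 0) {m : ℕ}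
    (hm : 1 ≤ m) :
    ∃ x : WittVector p k, x.coeff 0 ≠ 0 ∧ ∀ i < m, (frobenius x - a * x).coeff i = 0 := by
  induction m, hm using Nat.le_induction with
  | base =>
    obtain ⟨x, hx0, hx⟩ := exists_coeff_zero_frobenius_sub_mul_eq_zero ha
    exact ⟨x, hx0, fun i hi => by rwa [Nat.lt_one_iff.mp hi]⟩
  | succ m hm ih =>
    obtain ⟨x, hx0, hx⟩ := ih
    obtain ⟨t, ht⟩ := exists_frobenius_sub_mul_coeff_eq_zero_succ a ha hx
    refine ⟨x + verschiebung^[m] (teichmuller p t), ?_, ht⟩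
    rwa [add_coeff_zero, iterate_verschiebung_coeff_eq_zero _ hm, add_zero]

end WittVector

section wittQ

variable {p n : ℕ} [Fact p.Prime]

open TruncatedWittVector

theorem wittQ_eq_iff {R : Type*} [CommRing R] [CharP R p]
    {x y : (TruncatedWittVector p n R)ˣ} :
    wittQ p n R x = y ↔ mapRingHom p n (frobenius R p) x = y * x := by
  rw [wittQ, MonoidHom.div_apply, div_eq_iff_eq_mul, Units.ext_iff]
  rfl

theorem wittQ_eq_one_iff {R : Type*} [CommRing R] [CharP R p]
    {x : (TruncatedWittVector p n R)ˣ} :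
    wittQ p n R x = 1 ↔
      ∀ i, (x : TruncatedWittVector p n R).coeff i ^ p =
        (x : TruncatedWittVector p n R).coeff i := by
  simp only [wittQ_eq_iff, Units.val_one, one_mul, TruncatedWittVector.ext_iff, coeff_mapRingHom,
    frobenius_def]

theorem wittQ_surjective {k : Type*} [Field k] [CharP k p] [IsSepClosed k] (hn : 1 ≤ n) :
    Function.Surjective (wittQ p n k) := by
  intro b
  obtain ⟨a, ha⟩ := truncate_surjective (p := p) n k b
  have ha0 : a.coeff 0 ≠ 0 :=
    (isUnit_coeff_zero_of_isUnit_truncate hn (ha ▸ b.isUnit)).ne_zero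
  obtain ⟨x, hx0, hx⟩ := exists_frobenius_sub_mul_coeff_eq_zero ha0 hn
  have hu : IsUnit (truncate n x) := (isUnit_of_coeff_zero_ne_zero x hx0).map _
  refine ⟨hu.unit, wittQ_eq_iff.mpr ?_⟩
  rw [IsUnit.unit_spec, mapRingHom_truncate, ← frobenius_eq_map_frobenius, ← ha, ← map_mul,
    ← sub_eq_zero, ← map_sub, ← RingHom.mem_ker, mem_ker_truncate]
  exact hx

end wittQ

theorem stmt_0_general (p : ℕ) [Fact p.Prime] (K Ksep : Type*) [Field K]
    [Field Ksep] [Algebra K Ksep] [IsSepClosure K Ksep] [CharP Ksep p]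
    (n : ℕ) (hn : 1 ≤ n) :
    (∀ x y : (TruncatedWittVector p n Ksep)ˣ,
        wittQ p n Ksep (x * y) = wittQ p n Ksep x * wittQ p n Ksep y) ∧
    Function.Surjective (wittQ p n Ksep) ∧
    (∀ x : (TruncatedWittVector p n Ksep)ˣ,
        wittQ p n Ksep x = 1 ↔
          ∀ i : Fin n, ∃ c : ZMod p,
            ZMod.castHom (dvd_refl p) Ksep c
              = (x : TruncatedWittVector p n Ksep).coeff i) := by
  have : IsSepClosed Ksep := IsSepClosure.sep_closed K
  refine ⟨map_mul _, wittQ_surjective hn, fun x => ?_⟩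
  rw [wittQ_eq_one_iff]
  refine forall_congr' fun i => ?_
  rw [← Subfield.mem_bot_iff_pow_eq_self, ← ZMod.fieldRange_castHom_eq_bot p,
    RingHom.mem_fieldRange]

/--
For every `n ≥ 1`, the map `𝔮 : Wₙ(Kˢᵉᵖ)ˣ → Wₙ(Kˢᵉᵖ)ˣ`, `x ↦ F(x)·x⁻¹`,
is a surjective homomorphism of abelian groups whose kernel is exactly `Wₙ(𝔽_p)ˣ`, the group
of units of `Wₙ(Kˢᵉᵖ)` all of whose components lie in the prime field `𝔽_p`.
-/
theorem stmt_0 (p : ℕ) [Fact p.Prime] (K Ksep : Type*) [Field K] [CharP K p]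
    [Field Ksep] [Algebra K Ksep] [IsSepClosure K Ksep] [CharP Ksep p]
    (n : ℕ) (hn : 1 ≤ n) :
    (∀ x y : (TruncatedWittVector p n Ksep)ˣ,
        wittQ p n Ksep (x * y) = wittQ p n Ksep x * wittQ p n Ksep y) ∧
    Function.Surjective (wittQ p n Ksep) ∧
    (∀ x : (TruncatedWittVector p n Ksep)ˣ,
        wittQ p n Ksep x = 1 ↔
          ∀ i : Fin n, ∃ c : ZMod p,
            ZMod.castHom (dvd_refl p) Ksep c
              = (x : TruncatedWittVector p n Ksep).coeff i) :=
  stmt_0_general p K Ksep n hn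
end
end

section
/- Assume p > 2. Let 1 ≤ r ≤ n−2 and let a = (a_0, 0, ..., 0, a_r, a_{r+1}, ..., a_{n-1}) ∈ W_n(K)^× with a_0 ≠ 0, with components indexed 1 through r−1 equal to 0, and with a_r ≠ 0. Then the truncation of the Witt vector a^p to length r+2 equals (a_0^p, 0, ..., 0, a'_{r+1}) for some a'_{r+1} ∈ K with a'_{r+1} ≠ 0; in particular, the component of a^p in position r vanishes while the component in position r+1 is nonzero. -/
noncomputable section

open WittVector

/-!
Write `x = [x₀] + w` with `w = V^r z` and `z₀ = x_r`; the supports of the two summands are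
disjoint, so this holds componentwise. In characteristic `p`, `V^a W · V^b W ⊆ V^(a+b) W`, the
product of leading coefficients being `x_a^(p^b) y_b^(p^a)`, and `p ∈ V W`. As `r ≥ 1`, both
`p w²` and `w³` lie in `V^(r+2) W`, so modulo `V^(r+2) W` the binomial expansion of `x^p`
collapses (using `p > 2` for the term `w^p`) to `[x₀^p] + p [x₀]^(p-1) w`. The second summand
lies in `V^(r+1) W` with leading coefficient `((x₀^(p-1))^(p^r) x_r)^p ≠ 0`.
-/

theorem add_pow_prime_eq_of_mul_sq_eq_zero {R : Type*} [CommRing R] {p : ℕ} (hp : p.Prime)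
    (hp2 : 2 < p) {t w : R} (hpw : (p : R) * w ^ 2 = 0) (hw : w ^ 3 = 0) :
    (t + w) ^ p = t ^ p + p * t ^ (p - 1) * w := by
  have hterm : ∀ k ∈ Finset.range (p - 1),
      w ^ (k + 2) * t ^ (p - (k + 2)) * (p.choose (k + 2) : R) = 0 := by
    intro k hk
    rcases (show k + 2 < p ∨ k + 2 = p by grind) with hlt | heq
    · obtain ⟨c, hc⟩ := hp.dvd_choose_self (by omega) hlt
      calc w ^ (k + 2) * t ^ (p - (k + 2)) * (p.choose (k + 2) : R)
          = (p * w ^ 2) * (w ^ k * t ^ (p - (k + 2)) * c) := by rw [hc]; push_cast; ring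
        _ = 0 := by rw [hpw, zero_mul]
    · have hsplit : w ^ (k + 2) = w ^ 3 * w ^ (p - 3) := by rw [← pow_add]; congr 1; omega
      rw [hsplit, hw]
      ring
  rw [add_comm t w, add_pow, show p + 1 = p - 1 + 1 + 1 by omega, Finset.sum_range_succ',
    Finset.sum_range_succ', Finset.sum_eq_zero hterm]
  simp only [zero_add, pow_one, Nat.choose_one_right, pow_zero, tsub_zero, one_mul,
    Nat.choose_zero_right, Nat.cast_one, mul_one]
  ring

namespace WittVector

open Function

variable {p : ℕ} [Fact p.Prime] {R : Type*} [CommRing R]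

theorem teichmuller_add_iterate_verschiebung_shift {x : WittVector p R} {r : ℕ} (hr : 1 ≤ r)
    (hx : ∀ i, 1 ≤ i → i < r → x.coeff i = 0) :
    teichmuller p (x.coeff 0) + verschiebung^[r] (x.shift r) = x := by
  have hV : ∀ i, (verschiebung^[r] (x.shift r)).coeff i = if i < r then 0 else x.coeff i := by
    intro i
    split_ifs with hi
    · exact iterate_verschiebung_coeff_eq_zero _ hi
    · obtain ⟨k, rfl⟩ := Nat.exists_eq_add_of_le (not_lt.mp hi)
      rw [add_comm r k, iterate_verschiebung_coeff, shift_coeff, add_comm]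
  have hV0 : (verschiebung^[r] (x.shift r)).coeff 0 = 0 :=
    iterate_verschiebung_coeff_eq_zero _ hr
  ext i
  rw [coeff_add_of_disjoint]
  · rcases Nat.eq_zero_or_pos i with rfl | hi
    · rw [hV0, teichmuller_coeff_zero, add_zero]
    · rw [teichmuller_coeff_pos _ _ _ hi, zero_add, hV]
      split_ifs with hir
      · exact (hx i hi hir).symm
      · rfl
  · intro i
    rcases Nat.eq_zero_or_pos i with rfl | hi
    · exact Or.inr hV0
    · exact Or.inl (teichmuller_coeff_pos _ _ _ hi)

variable [CharP R p]

theorem mul_coeff_eq_zero_of_lt_add {x y : WittVector p R} {a b : ℕ}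
    (hx : ∀ i < a, x.coeff i = 0) (hy : ∀ i < b, y.coeff i = 0) :
    ∀ i < a + b, (x * y).coeff i = 0 := by
  rw [eq_iterate_verschiebung hx, eq_iterate_verschiebung hy, iterate_verschiebung_mul]
  exact fun i hi => iterate_verschiebung_coeff_eq_zero _ hi

theorem mul_coeff_add {x y : WittVector p R} {a b : ℕ}
    (hx : ∀ i < a, x.coeff i = 0) (hy : ∀ i < b, y.coeff i = 0) :
    (x * y).coeff (a + b) = x.coeff a ^ p ^ b * y.coeff b ^ p ^ a := by
  have h := iterate_verschiebung_mul_coeff (x.shift a) (y.shift b) a b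
  rwa [← eq_iterate_verschiebung hx, ← eq_iterate_verschiebung hy, shift_coeff, shift_coeff,
    add_zero, add_zero] at h

theorem coeff_p_eq_zero_of_lt_one : ∀ i < 1, (p : WittVector p R).coeff i = 0 := by
  intro i hi
  rw [Nat.lt_one_iff.mp hi, coeff_p_zero]

theorem truncate_pow_prime_eq (hp2 : 2 < p) {x : WittVector p R} {r : ℕ} (hr : 1 ≤ r)
    (hx : ∀ i, 1 ≤ i → i < r → x.coeff i = 0) :
    truncate (r + 2) (x ^ p) = truncate (r + 2) (teichmuller p (x.coeff 0 ^ p) +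
      (p : WittVector p R) *
        (teichmuller p (x.coeff 0) ^ (p - 1) * verschiebung^[r] (x.shift r))) := by
  set T := teichmuller p (x.coeff 0)
  set w := verschiebung^[r] (x.shift r)
  have hw : ∀ i < r, w.coeff i = 0 := fun i hi => iterate_verschiebung_coeff_eq_zero _ hi
  have hw2 := mul_coeff_eq_zero_of_lt_add hw hw
  have hpw : truncate (r + 2) ((p : WittVector p R) * w ^ 2) = 0 := by
    rw [← RingHom.mem_ker, mem_ker_truncate, sq]
    exact fun i hi => mul_coeff_eq_zero_of_lt_add coeff_p_eq_zero_of_lt_one hw2 i (by omega)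
  have hw3 : truncate (r + 2) (w ^ 3) = 0 := by
    rw [← RingHom.mem_ker, mem_ker_truncate, pow_three']
    exact fun i hi => mul_coeff_eq_zero_of_lt_add hw2 hw i (by omega)
  calc truncate (r + 2) (x ^ p) = (truncate (r + 2) T + truncate (r + 2) w) ^ p := by
        rw [← map_add, teichmuller_add_iterate_verschiebung_shift hr hx, map_pow]
    _ = truncate (r + 2) T ^ p + p * truncate (r + 2) T ^ (p - 1) * truncate (r + 2) w := by
        refine add_pow_prime_eq_of_mul_sq_eq_zero Fact.out hp2 ?_ ?_
        · simpa using hpw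
        · simpa using hw3
    _ = _ := by simp only [T, map_add, map_mul, map_pow, map_natCast, mul_assoc]

theorem coeff_pow_prime_of_coeff_eq_zero [NoZeroDivisors R] (hp2 : 2 < p)
    {x : WittVector p R} {r : ℕ} (hr : 1 ≤ r) (hx : ∀ i, 1 ≤ i → i < r → x.coeff i = 0)
    (hx0 : x.coeff 0 ≠ 0) (hxr : x.coeff r ≠ 0) :
    (x ^ p).coeff 0 = x.coeff 0 ^ p ∧ (∀ i, 1 ≤ i → i ≤ r → (x ^ p).coeff i = 0) ∧
      (x ^ p).coeff (r + 1) ≠ 0 := by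
  set M := (p : WittVector p R) *
    (teichmuller p (x.coeff 0) ^ (p - 1) * verschiebung^[r] (x.shift r))
  have hT : ∀ i < 0, (teichmuller p (x.coeff 0) ^ (p - 1)).coeff i = 0 :=
    fun i hi => absurd hi (Nat.not_lt_zero i)
  have hw : ∀ i < r, (verschiebung^[r] (x.shift r)).coeff i = 0 :=
    fun i hi => iterate_verschiebung_coeff_eq_zero _ hi
  have hwr : (verschiebung^[r] (x.shift r)).coeff r = x.coeff r := by
    simpa [shift_coeff] using iterate_verschiebung_coeff (x.shift r) r 0
  have hM : ∀ i < 1 + (0 + r), M.coeff i = 0 :=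
    mul_coeff_eq_zero_of_lt_add coeff_p_eq_zero_of_lt_one (mul_coeff_eq_zero_of_lt_add hT hw)
  have hMr : M.coeff (r + 1) = ((x.coeff 0 ^ (p - 1)) ^ p ^ r * x.coeff r) ^ p := by
    rw [show r + 1 = 1 + (0 + r) by omega, mul_coeff_add coeff_p_eq_zero_of_lt_one
      (mul_coeff_eq_zero_of_lt_add hT hw), mul_coeff_add hT hw, coeff_p_one, ← map_pow,
      teichmuller_coeff_zero, hwr, one_pow, one_mul, pow_zero, pow_one, pow_one]
  have hcoeff : ∀ i < r + 2,
      (x ^ p).coeff i = (teichmuller p (x.coeff 0 ^ p)).coeff i + M.coeff i := by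
    intro i hi
    rw [← coeff_add_of_disjoint]
    · simpa only [coeff_truncate] using
        congrArg (TruncatedWittVector.coeff ⟨i, hi⟩) (truncate_pow_prime_eq hp2 hr hx)
    · intro j
      rcases Nat.eq_zero_or_pos j with rfl | hj
      · exact Or.inr (hM 0 (by omega))
      · exact Or.inl (teichmuller_coeff_pos _ _ _ hj)
  refine ⟨?_, fun i hi1 hir => ?_, ?_⟩
  · rw [hcoeff 0 (by omega), hM 0 (by omega), teichmuller_coeff_zero, add_zero]
  · rw [hcoeff i (by omega), hM i (by omega), teichmuller_coeff_pos _ _ _ hi1, add_zero]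
  · rw [hcoeff (r + 1) (by omega), teichmuller_coeff_pos _ _ _ (by omega), zero_add, hMr]
    exact pow_ne_zero _ (mul_ne_zero (pow_ne_zero _ (pow_ne_zero _ hx0)) hxr)

end WittVector

/--
Assume `p > 2`. Let `1 ≤ r ≤ n−2` and let
`a = (a₀, 0, …, 0, a_r, a_{r+1}, …, a_{n-1}) ∈ Wₙ(K)ˣ` with `a₀ ≠ 0`, components indexed
`1` through `r−1` equal to `0`, and `a_r ≠ 0`.  Then the truncation of `a^p` to length
`r+2` equals `(a₀^p, 0, …, 0, a'_{r+1})` with `a'_{r+1} ≠ 0`: the coefficient of `a^p` in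
position `0` is `a₀^p`, those in positions `1, …, r` vanish, and that in position `r+1`
is nonzero.
-/
theorem stmt_3 (p n r : ℕ) [Fact p.Prime] (hp2 : 2 < p) (K : Type*) [Field K] [CharP K p]
    (hr1 : 1 ≤ r) (hrn : r + 2 ≤ n)
    (a : TruncatedWittVector p n K)
    (ha0 : a.coeff ⟨0, by omega⟩ ≠ 0)
    (hmid : ∀ m : Fin n, 1 ≤ (m : ℕ) → (m : ℕ) < r → a.coeff m = 0)
    (har : a.coeff ⟨r, by omega⟩ ≠ 0) :
    (a ^ p).coeff ⟨0, by omega⟩ = a.coeff ⟨0, by omega⟩ ^ p ∧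
    (∀ m : Fin n, 1 ≤ (m : ℕ) → (m : ℕ) ≤ r → (a ^ p).coeff m = 0) ∧
    (a ^ p).coeff ⟨r + 1, by omega⟩ ≠ 0 := by
  obtain ⟨x, rfl⟩ := WittVector.truncate_surjective p n K a
  simp only [← map_pow, WittVector.coeff_truncate] at *
  obtain ⟨hpow0, hpow_mid, hpow_succ⟩ := WittVector.coeff_pow_prime_of_coeff_eq_zero hp2 hr1
    (fun i h1 h2 => hmid ⟨i, by omega⟩ h1 h2) ha0 har
  exact ⟨hpow0, fun m h1 h2 => hpow_mid m h1 h2, hpow_succ⟩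
end
end
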